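/- arXiv:1305.2841 — 3 statements merged into one kernel-verified Lean document; each statement's English description precedes it below -/
import Mathlib

section
/- Let R be a commutative ring, α, β ∈ R, and define gₙ, hₙ ∈ R[t] by g₀ = 0, h₀ = 1, g_{n+1} = α t gₙ² + hₙ², h_{n+1} = β t gₙ² + hₙ². Then g₁ = h₁ = 1, and for every n ≥ 2: gₙ has degree ≤ 2^{n−1} − 1 with coefficient of t^{2^{n−1}−1} equal to α^{2^{n−1}−1}, and hₙ has degree ≤ 2^{n−1} − 1 with coefficient of t^{2^{n−1}−1} equal to β·α^{2^{n−1}−2}. -/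
/-! If `p, q` have degree `≤ d`, then `C γ * X * p ^ 2 + q ^ 2` has degree `≤ 2 d + 1`, and its
coefficient of `X ^ (2 d + 1)` comes only from `X * p ^ 2`: it is `γ * (p.coeff d) ^ 2`. Since
`2 ^ (n + 1) - 1 = 2 (2 ^ n - 1) + 1`, induction from `g₁ = h₁ = 1` gives the top coefficient
`α ^ (2 ^ n - 1)` of `g (n + 1)`, and one more step gives `β * α ^ (2 ^ n - 2)` for `h (n + 1)`. -/

open Polynomial

section Step

variable {R : Type*} [CommRing R] (γ : R) {p q : R[X]} {d : ℕ}

theorem natDegree_C_mul_X_mul_sq_add_sq_le (hp : p.natDegree ≤ d) (hq : q.natDegree ≤ d) :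
    (C γ * X * p ^ 2 + q ^ 2).natDegree ≤ 2 * d + 1 := by
  have hCX : (C γ * X).natDegree ≤ 1 := (natDegree_C_mul_le γ X).trans natDegree_X_le
  have hp2 : (p ^ 2).natDegree ≤ 2 * d := natDegree_pow_le_of_le 2 hp
  have hq2 : (q ^ 2).natDegree ≤ 2 * d := natDegree_pow_le_of_le 2 hq
  refine (natDegree_add_le _ _).trans (max_le ?_ (by omega))
  exact natDegree_mul_le.trans (by omega)

theorem coeff_C_mul_X_mul_sq_add_sq (hp : p.natDegree ≤ d) (hq : q.natDegree ≤ d) :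
    (C γ * X * p ^ 2 + q ^ 2).coeff (2 * d + 1) = γ * p.coeff d ^ 2 := by
  have hq2 : (q ^ 2).natDegree < 2 * d + 1 := (natDegree_pow_le_of_le 2 hq).trans_lt (by omega)
  rw [coeff_add, coeff_eq_zero_of_natDegree_lt hq2, mul_assoc, coeff_C_mul, coeff_X_mul,
    coeff_pow_of_natDegree_le hp, add_zero]

end Step

theorem two_pow_succ_sub_one_eq (n : ℕ) : 2 ^ (n + 1) - 1 = 2 * (2 ^ n - 1) + 1 := by
  have := Nat.one_le_two_pow (n := n)
  rw [pow_succ]; omega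

theorem natDegree_le_and_coeff_of_sq_rec {R : Type*} [CommRing R] {α β : R} {g h : ℕ → R[X]}
    (hg1 : g 1 = 1) (hh1 : h 1 = 1)
    (hgrec : ∀ n, g (n + 1) = C α * X * g n ^ 2 + h n ^ 2)
    (hhrec : ∀ n, h (n + 1) = C β * X * g n ^ 2 + h n ^ 2) (n : ℕ) :
    (g (n + 1)).natDegree ≤ 2 ^ n - 1 ∧ (h (n + 1)).natDegree ≤ 2 ^ n - 1 ∧
      (g (n + 1)).coeff (2 ^ n - 1) = α ^ (2 ^ n - 1) := by
  induction n with
  | zero => simp [hg1, hh1]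
  | succ n ih =>
    obtain ⟨hg, hh, hcoeff⟩ := ih
    rw [two_pow_succ_sub_one_eq, hgrec (n + 1), hhrec (n + 1)]
    refine ⟨natDegree_C_mul_X_mul_sq_add_sq_le α hg hh, natDegree_C_mul_X_mul_sq_add_sq_le β hg hh,
      ?_⟩
    rw [coeff_C_mul_X_mul_sq_add_sq α hg hh, hcoeff, ← pow_mul, ← pow_succ', mul_comm]

/-- over a commutative ring R with α, β ∈ R, define gₙ, hₙ ∈ R[t] by
g₀ = 0, h₀ = 1, g_{n+1} = α t gₙ² + hₙ², h_{n+1} = β t gₙ² + hₙ².  Then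
g₁ = h₁ = 1, and for every n ≥ 2: gₙ has degree ≤ 2^{n−1} − 1 with coefficient of
t^{2^{n−1}−1} equal to α^{2^{n−1}−1}, and hₙ has degree ≤ 2^{n−1} − 1 with
coefficient of t^{2^{n−1}−1} equal to β·α^{2^{n−1}−2}. -/
theorem stmt_10 (R : Type*) [CommRing R] (α β : R) (g h : ℕ → Polynomial R)
    (hg0 : g 0 = 0) (hh0 : h 0 = 1)
    (hgrec : ∀ n, g (n + 1) = Polynomial.C α * Polynomial.X * (g n) ^ 2 + (h n) ^ 2)
    (hhrec : ∀ n, h (n + 1) = Polynomial.C β * Polynomial.X * (g n) ^ 2 + (h n) ^ 2) :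
    g 1 = 1 ∧ h 1 = 1 ∧
    ∀ n, 2 ≤ n →
      ((g n).natDegree ≤ 2 ^ (n - 1) - 1 ∧
       (g n).coeff (2 ^ (n - 1) - 1) = α ^ (2 ^ (n - 1) - 1) ∧
       (h n).natDegree ≤ 2 ^ (n - 1) - 1 ∧
       (h n).coeff (2 ^ (n - 1) - 1) = β * α ^ (2 ^ (n - 1) - 2)) := by
  have hg1 : g 1 = 1 := by simp [hgrec, hg0, hh0]
  have hh1 : h 1 = 1 := by simp [hhrec, hg0, hh0]
  refine ⟨hg1, hh1, fun n hn ↦ ?_⟩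
  obtain ⟨m, rfl⟩ : ∃ m, n = m + 1 + 1 := ⟨n - 2, by omega⟩
  have hd : 2 ^ (m + 1) - 2 = 2 * (2 ^ m - 1) := by rw [Nat.mul_sub_one, pow_succ']
  obtain ⟨hg, hh, hcoeff⟩ := natDegree_le_and_coeff_of_sq_rec hg1 hh1 hgrec hhrec m
  obtain ⟨hg', hh', hcoeff'⟩ := natDegree_le_and_coeff_of_sq_rec hg1 hh1 hgrec hhrec (m + 1)
  refine ⟨hg', hcoeff', hh', ?_⟩
  rw [Nat.add_sub_cancel, two_pow_succ_sub_one_eq, hhrec (m + 1),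
    coeff_C_mul_X_mul_sq_add_sq β hg hh, hcoeff, hd, ← pow_mul, mul_comm (2 ^ m - 1)]
end

section
/- Let K be a field of characteristic ≠ 2 and f: P¹_K → P¹_K a quadratic morphism with critical point 0, such that f(−x) = f(x) and 0 has finite forward orbit under f. Then there exist integers k > ℓ > 0 with f^k(0) = −f^ℓ(0). -/
/-!
A finite orbit of `0` has a coincidence `f^[i] 0 = f^[j] 0` with `i < j`. If `i = 0`, then `0` is
periodic of some period `n` and `f^[2n] 0 = 0 = -f^[n] 0`. If `i > 0`, since `f` identifies only
`±`-pairs, `f^[i-1] 0 = ±f^[j-1] 0`: the sign `+` is a coincidence with smaller `i`, and the sign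
`−` is the claim unless `i = 1`, where it makes `0` periodic again.
-/

/-- The automorphism `x ↦ −x` of `P¹ = Option K` (`none` = `∞`). -/
def negMap {K : Type*} [Field K] : Option K → Option K
  | none => none
  | some x => some (-x)

section SymmetricReturn

variable {α : Type*} {f σ : α → α} {x : α}

theorem exists_iterate_eq_of_isPeriodicPt {n : ℕ} (hn : 0 < n) (hper : f.IsPeriodicPt n x)
    (hfix : σ x = x) : ∃ k ℓ, 0 < ℓ ∧ ℓ < k ∧ f^[k] x = σ (f^[ℓ] x) :=
  ⟨n * 2, n, hn, by omega, by rw [(hper.mul_const 2).eq, hper.eq, hfix]⟩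

theorem exists_iterate_eq_of_iterate_eq_iterate (hfiber : ∀ z w, f z = f w → z = w ∨ z = σ w)
    (hfix : σ x = x) {i j : ℕ} (hij : i < j) (heq : f^[i] x = f^[j] x) :
    ∃ k ℓ, 0 < ℓ ∧ ℓ < k ∧ f^[k] x = σ (f^[ℓ] x) := by
  induction i generalizing j with
  | zero => exact exists_iterate_eq_of_isPeriodicPt hij heq.symm hfix
  | succ a ih =>
    obtain ⟨b, rfl⟩ : ∃ b, j = b + 1 := ⟨j - 1, by omega⟩
    rw [Function.iterate_succ_apply', Function.iterate_succ_apply'] at heq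
    rcases hfiber _ _ heq.symm with heq' | hneg
    · exact ih (by omega) heq'.symm
    · rcases Nat.eq_zero_or_pos a with rfl | ha
      · exact exists_iterate_eq_of_isPeriodicPt (by omega) (hneg.trans hfix) hfix
      · exact ⟨b, a, ha, by omega, hneg⟩

end SymmetricReturn

theorem stmt_12_general (K : Type*) [Field K]
    (f : Option K → Option K)
    (hram : ∀ z w, f z = f w → z = w ∨ z = negMap w)
    (hfin : Set.Finite {z | ∃ n, f^[n] (some 0) = z}) :
    ∃ k ℓ, 0 < ℓ ∧ ℓ < k ∧ f^[k] (some 0) = negMap (f^[ℓ] (some 0)) := by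
  obtain ⟨i, j, hij, heq⟩ :=
    hfin.exists_lt_map_eq_of_forall_mem (f := fun n ↦ f^[n] (some 0))
      fun n ↦ Set.mem_ofPred.2 ⟨n, rfl⟩
  exact exists_iterate_eq_of_iterate_eq_iterate hram (by simp [negMap]) hij heq

/-- let K be a field of characteristic ≠ 2 and f a quadratic morphism
on P¹_K with critical point 0, such that f(−x) = f(x) (f(R) = f(R') implies
R' = ±R, being a degree-2 covering with covering involution x ↦ −x) and 0 has
finite forward orbit under f.  Then there exist integers k > ℓ > 0 with
f^k(0) = −f^ℓ(0). -/
theorem stmt_12 (K : Type*) [Field K] (hchar : ringChar K ≠ 2)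
    (f : Option K → Option K)
    (heven : ∀ z, f (negMap z) = f z)
    (hram : ∀ z w, f z = f w → z = w ∨ z = negMap w)
    (hcrit0 : f ⁻¹' {f (some 0)} = {some 0})
    (hfin : Set.Finite {z | ∃ n, f^[n] (some 0) = z}) :
    ∃ k ℓ, 0 < ℓ ∧ ℓ < k ∧ f^[k] (some 0) = negMap (f^[ℓ] (some 0)) :=
  stmt_12_general K f hram hfin
end

section
/- Let T be a finite tree and σ an automorphism with σ² = id fixing at least one vertex. Define the quotient graph T/⟨σ⟩ with vertex set the σ-orbits of vertices, where orbits {t, σ(t)} and {t', σ(t')} are joined by an edge iff t is adjacent to t' or to σ(t') in T. Then T/⟨σ⟩ is a tree. -/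
/-!
A cycle of `T/⟨σ⟩` based at the orbit of `v` lifts to a walk of `T` from `v` to `v` or to `σ v`
whose tail is a path. In the first case the lift is a cycle of `T`. In the second it is the
unique path from `v` to `σ v`, which `σ` reverses; so the cycle reads the same backwards, which
no cycle does.
-/

/-- The setoid on vertices whose classes are the orbits {v, σ v} of an
involution σ. -/
def orbSetoid {V : Type*} (σ : V → V) (h : ∀ v, σ (σ v) = v) : Setoid V :=
  ⟨fun v w => w = v ∨ w = σ v, by
    constructor
    · intro v; exact Or.inl rfl
    · intro v w hw
      rcases hw with h1 | h1
      · exact Or.inl h1.symm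
      · subst h1; exact Or.inr (h v).symm
    · intro u v w h1 h2
      rcases h1 with h1 | h1 <;> rcases h2 with h2 | h2 <;> subst h1 <;> subst h2
      · exact Or.inl rfl
      · exact Or.inr rfl
      · exact Or.inr rfl
      · exact Or.inl (h u)⟩

/-- The quotient graph T/⟨σ⟩: vertices are the σ-orbits of vertices of T, and two
distinct orbits {t, σ(t)} and {t', σ(t')} are joined by an edge iff some
representative of the first is adjacent in T to some representative of the second
(equivalently, t is adjacent to t' or to σ(t')). -/
def quotGraph {V : Type*} (G : SimpleGraph V) (σ : V → V) (h : ∀ v, σ (σ v) = v) :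
    SimpleGraph (Quotient (orbSetoid σ h)) where
  Adj a b := a ≠ b ∧ ∃ v w : V, Quotient.mk (orbSetoid σ h) v = a ∧
    Quotient.mk (orbSetoid σ h) w = b ∧ G.Adj v w
  symm := by
    constructor
    rintro a b ⟨hne, v, w, hv, hw, hadj⟩
    exact ⟨hne.symm, w, v, hw, hv, hadj.symm⟩
  loopless := by
    constructor
    rintro a ⟨hne, -⟩
    exact hne rfl

open SimpleGraph Walk

lemma SimpleGraph.Walk.IsCycle.support_reverse_ne {V : Type*} {G : SimpleGraph V} {u : V}
    {c : G.Walk u u} (hc : c.IsCycle) : c.support.reverse ≠ c.support := by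
  intro h
  have hrev : c.reverse = c := ext_support (by rw [support_reverse, h])
  exact hc.snd_ne_penultimate (by rw [← snd_reverse, hrev])

lemma SimpleGraph.IsAcyclic.support_map_eq_reverse {V : Type*} {G : SimpleGraph V}
    (hG : G.IsAcyclic) (φ : G ≃g G) {u v : V} {p : G.Walk u v} (hp : p.IsPath)
    (hu : φ u = v) (hv : φ v = u) : p.support.map φ = p.support.reverse := by
  have hφp : ((p.map φ.toHom).copy hu hv).IsPath := by
    rw [isPath_copy]; exact hp.map φ.injective
  have := congrArg (fun q : G.Path v u => q.1.support)
    ((hG.subsingleton_path v u).elim ⟨_, hφp⟩ ⟨p.reverse, hp.reverse⟩)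
  simpa [support_copy, support_map, support_reverse] using this

section Quotient

variable {V : Type*} {G : SimpleGraph V} {σ : V → V} {h : ∀ v, σ (σ v) = v}

lemma orbSetoid_mk_eq_mk_iff {u v : V} :
    Quotient.mk (orbSetoid σ h) u = Quotient.mk (orbSetoid σ h) v ↔ v = u ∨ v = σ u :=
  Quotient.eq

lemma orbSetoid_mk_apply (u : V) :
    Quotient.mk (orbSetoid σ h) (σ u) = Quotient.mk (orbSetoid σ h) u :=
  Quotient.sound (Or.inr (h u).symm)

lemma quotGraph_reachable_mk {u v : V} (huv : G.Reachable u v) :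
    (quotGraph G σ h).Reachable (Quotient.mk _ u) (Quotient.mk _ v) := by
  obtain ⟨p⟩ := huv
  induction p with
  | nil => rfl
  | @cons u w v hadj _ ih =>
    by_cases heq : Quotient.mk (orbSetoid σ h) u = Quotient.mk _ w
    · rwa [heq]
    · exact (show (quotGraph G σ h).Adj _ _ from ⟨heq, u, w, rfl, rfl, hadj⟩).reachable.trans ih

lemma SimpleGraph.Connected.quotGraph (hG : G.Connected) : (quotGraph G σ h).Connected := by
  refine (connected_iff _).2 ⟨fun a b => ?_, hG.nonempty.map (Quotient.mk _)⟩
  induction a using Quotient.ind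
  induction b using Quotient.ind
  exact quotGraph_reachable_mk (hG.preconnected _ _)

variable (hσ : ∀ u v, G.Adj u v → G.Adj (σ u) (σ v))
include hσ

lemma exists_adj_of_quotGraph_adj {v : V} {b : Quotient (orbSetoid σ h)}
    (hvb : (quotGraph G σ h).Adj (Quotient.mk _ v) b) :
    ∃ w, G.Adj v w ∧ Quotient.mk _ w = b := by
  obtain ⟨-, x, y, hx, rfl, hxy⟩ := hvb
  rcases orbSetoid_mk_eq_mk_iff.1 hx.symm with rfl | rfl
  · exact ⟨y, hxy, rfl⟩
  · exact ⟨σ y, h v ▸ hσ _ _ hxy, orbSetoid_mk_apply y⟩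

lemma exists_walk_support_map_eq {a b : Quotient (orbSetoid σ h)}
    (p : (quotGraph G σ h).Walk a b) (v : V) (hv : Quotient.mk _ v = a) :
    ∃ w, Quotient.mk _ w = b ∧ ∃ q : G.Walk v w, q.support.map (Quotient.mk _) = p.support := by
  induction p generalizing v with
  | nil => exact ⟨v, hv, nil, by simp [hv]⟩
  | cons hadj _ ih =>
    subst hv
    obtain ⟨v', hvv', hv'⟩ := exists_adj_of_quotGraph_adj hσ hadj
    obtain ⟨w, hw, q, hq⟩ := ih v' hv'
    exact ⟨w, hw, cons hvv' q, by simp [hq]⟩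

end Quotient

lemma SimpleGraph.IsAcyclic.quotGraph {V : Type*} {G : SimpleGraph V} (hG : G.IsAcyclic)
    (σ : G ≃g G) (h : ∀ v, σ (σ v) = v) : (quotGraph G (fun v => σ v) h).IsAcyclic := by
  intro a c hc
  induction a using Quotient.ind with | _ v => ?_
  obtain ⟨w, hw, q, hq⟩ :=
    exists_walk_support_map_eq (fun _ _ => σ.map_adj_iff.2) c v rfl
  have hlen : q.length = c.length := by
    simpa [length_support] using congrArg List.length hq
  have hq_ne_nil : ¬ q.Nil := by
    rw [← length_eq_zero_iff, hlen]; have := hc.three_le_length; omega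
  have htail_map :
      q.tail.support.map (Quotient.mk (orbSetoid (fun v => σ v) h)) = c.tail.support := by
    rw [support_tail_of_not_nil _ hq_ne_nil, support_tail_of_not_nil _ hc.not_nil, ← hq,
      List.map_tail]
  have htail_nodup : (q.tail.support.map (Quotient.mk (orbSetoid (fun v => σ v) h))).Nodup := by
    rw [htail_map]; exact hc.isPath_tail.support_nodup
  have htail : q.tail.IsPath := IsPath.mk' htail_nodup.of_map
  by_cases hwv : w = v
  · subst hwv
    exact hG q (isCycle_iff_isPath_tail_and_le_length.2 ⟨htail, hlen ▸ hc.three_le_length⟩)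
  have hvw : w = σ v := (orbSetoid_mk_eq_mk_iff.1 hw.symm).resolve_left hwv
  have hqpath : q.IsPath := by
    rw [isPath_def, ← cons_support_tail hq_ne_nil, List.nodup_cons]
    refine ⟨fun hv => hwv (List.inj_on_of_nodup_map htail_nodup q.tail.end_mem_support hv hw),
      htail.support_nodup⟩
  have hswap := hG.support_map_eq_reverse σ hqpath hvw.symm (by rw [hvw, h])
  apply hc.support_reverse_ne
  rw [← hq, ← List.map_reverse, ← hswap, List.map_map]
  exact List.map_congr_left fun u _ => orbSetoid_mk_apply u

theorem stmt_18_general {V : Type*} (G : SimpleGraph V) (hT : G.IsTree)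
    (σ : G ≃g G) (h2 : ∀ v, σ (σ v) = v) :
    (quotGraph G (fun v => σ v) h2).IsTree :=
  ⟨hT.connected.quotGraph, hT.isAcyclic.quotGraph σ h2⟩

/-- let T be a finite tree and σ an automorphism with σ² = id fixing
at least one vertex.  Then the quotient graph T/⟨σ⟩ is a tree. -/
theorem stmt_18 {V : Type*} [Fintype V] (G : SimpleGraph V) (hT : G.IsTree)
    (σ : G ≃g G) (h2 : ∀ v, σ (σ v) = v)
    (hfix : ∃ v, σ v = v) :
    (quotGraph G (fun v => σ v) h2).IsTree :=
  stmt_18_general G hT σ h2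
end
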